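/- Let A be a commutative unital ℂ-algebra, n ≥ 1 an integer, and m_1 < m_2 < ⋯ < m_n integers. Let D be the differential operator acting on A((x)) by Df = f^{(n)} + ∑_{i=1}^{n} (∑_{j=−i}^{∞} b_{ij} x^j) · f^{(n−i)}, with coefficients b_{ij} ∈ A. Suppose that for each i = 1, …, n the equation Df = 0 has a solution f_i ∈ A((x)) of the form f_i = x^{m_i} + a_1^{(i)} x^{m_i+1} + a_2^{(i)} x^{m_i+2} + ⋯ with a_l^{(i)} ∈ A. Set ν_i = m_{n+1−i} − n + i for i = 1, …, n. Then there exist formal power series c_i = d_0^{(i)} + d_1^{(i)} x + d_2^{(i)} x² + ⋯ ∈ A[[x]] such that D = D_1 D_2 ⋯ D_n as operators on A((x)), i.e., Df = D_1(D_2(⋯ D_n(f)⋯)) for every f ∈ A((x)), where the first-order operator D_i acts by D_i g = g′ − ν_i x^{−1} g + c_i g. -/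

import Mathlib

/-- The termwise formal derivative of a formal Laurent series. -/
noncomputable def lderiv {A : Type*} [CommRing A] (f : LaurentSeries A) : LaurentSeries A where
  coeff q := (q + 1) • f.coeff (q + 1)
  isPWO_support' := by
    have h : Function.support (fun q : ℤ => (q + 1) • f.coeff (q + 1)) ⊆
        (fun q : ℤ => q - 1) '' f.support := by
      intro q hq
      refine ⟨q + 1, ?_, by ring⟩
      intro hc
      simp [Function.mem_support, hc] at hq
    exact (Set.IsPWO.image_of_monotone f.isPWO_support (fun a b hab => by omega)).mono h

/-- The formal Laurent series `∑_{l=0}^{∞} a_l x^{m+l}` with coefficients `a_l`. -/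
noncomputable def shiftSeries {A : Type*} [CommRing A] (m : ℤ) (a : ℕ → A) :
    LaurentSeries A :=
  (HahnSeries.single m (1 : A)) * (HahnSeries.ofPowerSeries ℤ A (PowerSeries.mk a))

/-- The monic differential operator
`Df = f^{(n)} + ∑_{i=1}^{n} (∑_{j=−i}^{∞} b_{ij} x^j) f^{(n−i)}` acting on `A((x))`. -/
noncomputable def DoprMonic {A : Type*} [CommRing A] (n : ℕ) (b : ℕ → ℤ → A)
    (f : LaurentSeries A) : LaurentSeries A :=
  lderiv^[n] f + ∑ i ∈ Finset.Icc 1 n,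
    shiftSeries (-(i : ℤ)) (fun l => b i ((l : ℤ) - (i : ℤ))) * lderiv^[n - i] f

/-- The first-order operator `D_i g = g′ − ν x^{−1} g + c g`. -/
noncomputable def firstOrderOp {A : Type*} [CommRing A] (ν : ℤ) (c : PowerSeries A)
    (g : LaurentSeries A) : LaurentSeries A :=
  lderiv g - ν • (HahnSeries.single (-1 : ℤ) (1 : A) * g) +
    (HahnSeries.ofPowerSeries ℤ A c) * g

/-!
Induction on `n`. The solution `f₁ = x^{m₁} U`, with `U(0)` a unit, is a unit of `A((x))`, and the
first-order operator killing it is `L g = g′ + w g` with `w = -f₁′/f₁ = -m₁/x - U′/U`; this `L` is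
`D_n`. Euclidean division on the right by `L` writes `D = Q ∘ L + r`, and it preserves the Fuchsian
shape: in `D - ∂ⁿ` the coefficient of `∂ᵏ` has a pole of order at most `n - k`, and the same holds
for `Q`, so `Q` is again monic of this type, of order `n - 1`. Applying the identity to `f₁` gives
`r f₁ = 0`, hence `r = 0`. For `i ≥ 2`, `L f_i = x^{m_i - 1} ((m_i - m₁) U_i(0) + ⋯)` is a solution
of `Q` whose leading coefficient is again a unit, since `m_i - m₁ ≠ 0` is invertible in a
`ℂ`-algebra; the induction hypothesis factors `Q`.
-/

open HahnSeries
open scoped LaurentSeries PowerSeries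

namespace HahnSeries

variable {Γ R : Type*}

theorem le_orderTop_of_le [LinearOrder Γ] [Zero R] {x : HahnSeries Γ R} {a b : Γ}
    (h : (a : WithTop Γ) ≤ x.orderTop) (hba : b ≤ a) : (b : WithTop Γ) ≤ x.orderTop :=
  (WithTop.coe_le_coe.2 hba).trans h

theorem le_orderTop_add [LinearOrder Γ] [AddMonoid R] {x y : HahnSeries Γ R} {a : WithTop Γ}
    (hx : a ≤ x.orderTop) (hy : a ≤ y.orderTop) : a ≤ (x + y).orderTop :=
  (le_min hx hy).trans min_orderTop_le_orderTop_add

theorem le_orderTop_sub [LinearOrder Γ] [AddGroup R] {x y : HahnSeries Γ R} {a : WithTop Γ}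
    (hx : a ≤ x.orderTop) (hy : a ≤ y.orderTop) : a ≤ (x - y).orderTop :=
  (le_min hx hy).trans min_orderTop_le_orderTop_sub

theorem le_orderTop_mul [AddCommMonoid Γ] [LinearOrder Γ] [IsOrderedCancelAddMonoid Γ]
    [NonUnitalNonAssocSemiring R] {x y : HahnSeries Γ R} {a b : Γ}
    (hx : (a : WithTop Γ) ≤ x.orderTop) (hy : (b : WithTop Γ) ≤ y.orderTop) :
    ((a + b : Γ) : WithTop Γ) ≤ (x * y).orderTop := by
  rw [WithTop.coe_add]
  exact (add_le_add hx hy).trans orderTop_add_le_mul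

end HahnSeries

theorem Finset.sum_Icc_one_eq_sum_range_sub {M : Type*} [AddCommMonoid M] (F : ℕ → M) (n : ℕ) :
    ∑ i ∈ Finset.Icc 1 n, F i = ∑ k ∈ Finset.range n, F (n - k) := by
  rw [Finset.range_eq_Ico, Finset.sum_Ico_reflect F 0 n.le_succ, Nat.add_sub_cancel_left,
    Nat.sub_zero, Finset.Ico_add_one_right_eq_Icc]

section

variable {A : Type*} [CommRing A]

@[simp]
theorem coeff_lderiv (f : A⸨X⸩) (q : ℤ) : (lderiv f).coeff q = (q + 1) • f.coeff (q + 1) :=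
  rfl

theorem lderiv_add (f g : A⸨X⸩) : lderiv (f + g) = lderiv f + lderiv g := by
  ext q
  simp [smul_add]

noncomputable def lderivAddHom : A⸨X⸩ →+ A⸨X⸩ :=
  AddMonoidHom.mk' lderiv lderiv_add

theorem lderiv_sum {ι : Type*} (s : Finset ι) (f : ι → A⸨X⸩) :
    lderiv (∑ i ∈ s, f i) = ∑ i ∈ s, lderiv (f i) :=
  map_sum lderivAddHom f s

theorem iterate_lderiv_add (k : ℕ) (f g : A⸨X⸩) :
    lderiv^[k] (f + g) = lderiv^[k] f + lderiv^[k] g :=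
  iterate_map_add lderivAddHom k f g

theorem iterate_lderiv_zero (k : ℕ) : lderiv^[k] (0 : A⸨X⸩) = 0 :=
  iterate_map_zero lderivAddHom k

/-- The Euler operator `x d/dx`: it acts diagonally on coefficients, which makes its Leibniz rule
a direct computation. -/
noncomputable def eulerOp (f : A⸨X⸩) : A⸨X⸩ where
  coeff q := q • f.coeff q
  isPWO_support' := f.isPWO_support.mono fun q hq h => hq (by simp [h])

theorem support_eulerOp_subset (f : A⸨X⸩) : (eulerOp f).support ⊆ f.support :=
  fun q hq h => hq (by simp [eulerOp, h])

theorem eulerOp_mul (f g : A⸨X⸩) : eulerOp (f * g) = eulerOp f * g + f * eulerOp g := by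
  ext q
  rw [coeff_add, coeff_mul_left' f.isPWO_support (support_eulerOp_subset f),
    coeff_mul_right' g.isPWO_support (support_eulerOp_subset g)]
  simp only [eulerOp, coeff_mul, Finset.smul_sum, ← Finset.sum_add_distrib]
  refine Finset.sum_congr rfl fun ij hij => ?_
  rw [← (Finset.mem_antidiagonal.1 hij).2.2]
  simp only [zsmul_eq_mul]
  push_cast
  ring

theorem lderiv_eq_single_mul_eulerOp (f : A⸨X⸩) : lderiv f = single (-1) 1 * eulerOp f := by
  ext q
  rw [show q = q + 1 + -1 by ring, coeff_single_mul_add, one_mul]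
  simp [eulerOp]

theorem lderiv_mul (f g : A⸨X⸩) : lderiv (f * g) = lderiv f * g + f * lderiv g := by
  simp only [lderiv_eq_single_mul_eulerOp, eulerOp_mul]
  ring

theorem lderiv_single (m : ℤ) (r : A) : lderiv (single m r) = single (m - 1) (m • r) := by
  ext q
  by_cases h : q = m - 1
  · simp [h]
  · simp [coeff_single_of_ne h, coeff_single_of_ne (show q + 1 ≠ m by omega)]

theorem lderiv_coe (φ : A⟦X⟧) : lderiv (φ : A⸨X⸩) = (d⁄dX A φ : A⟦X⟧) := by
  ext q
  rw [coeff_lderiv, PowerSeries.coeff_coe, PowerSeries.coeff_coe]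
  rcases lt_or_ge q 0 with hq | hq
  · rcases lt_or_eq_of_le (show q + 1 ≤ 0 by omega) with h | h
    all_goals simp [hq, h]
  · lift q to ℕ using hq
    simp [PowerSeries.coeff_derivative, show ((q : ℤ) + 1).natAbs = q + 1 by omega, mul_comm,
      show ¬((q : ℤ) + 1 < 0) by omega]

theorem le_orderTop_lderiv {f : A⸨X⸩} {a : ℤ} (hf : (a : WithTop ℤ) ≤ f.orderTop) :
    ((a - 1 : ℤ) : WithTop ℤ) ≤ (lderiv f).orderTop := by
  refine le_orderTop_iff_forall.2 fun q hq => ?_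
  rw [coeff_lderiv, coeff_eq_zero_of_lt_orderTop, smul_zero]
  exact lt_of_lt_of_le (WithTop.coe_lt_coe.2 (by have := WithTop.coe_lt_coe.1 hq; omega)) hf

theorem zero_le_orderTop_coe (φ : A⟦X⟧) : (0 : WithTop ℤ) ≤ (φ : A⸨X⸩).orderTop :=
  le_orderTop_iff_forall.2 fun q hq => by
    rw [PowerSeries.coeff_coe, if_pos (WithTop.coe_lt_coe.1 hq)]

theorem coeff_shiftSeries (m : ℤ) (a : ℕ → A) (q : ℤ) :
    (shiftSeries m a).coeff q = if m ≤ q then a (q - m).toNat else 0 := by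
  conv_lhs => rw [shiftSeries, ← sub_add_cancel q m, coeff_single_mul_add, one_mul,
    PowerSeries.coeff_coe]
  split_ifs with h h'
  · omega
  · rfl
  · rw [PowerSeries.coeff_mk]
    congr 1
    omega
  · omega

theorem le_orderTop_shiftSeries (m : ℤ) (a : ℕ → A) :
    (m : WithTop ℤ) ≤ (shiftSeries m a).orderTop :=
  le_orderTop_iff_forall.2 fun q hq => by
    rw [coeff_shiftSeries, if_neg (not_le.2 (WithTop.coe_lt_coe.1 hq))]

theorem shiftSeries_eq_of_le_orderTop {g : A⸨X⸩} {m : ℤ} {a : ℕ → A}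
    (hg : (m : WithTop ℤ) ≤ g.orderTop) (ha : ∀ l : ℕ, a l = g.coeff (m + l)) :
    shiftSeries m a = g := by
  ext q
  rw [coeff_shiftSeries]
  split_ifs with h
  · rw [ha]
    congr 1
    omega
  · exact (coeff_eq_zero_of_lt_orderTop ((WithTop.coe_lt_coe.2 (not_le.1 h)).trans_le hg)).symm

theorem isUnit_shiftSeries (m : ℤ) {a : ℕ → A} (ha : IsUnit (a 0)) : IsUnit (shiftSeries m a) := by
  refine IsUnit.mul (IsUnit.of_mul_eq_one (single (-m) 1) ?_) ?_
  · rw [single_mul_single, add_neg_cancel, one_mul, single_zero_one]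
  · exact (PowerSeries.isUnit_iff_constantCoeff.2 ha).map _

/-- `R = ∑_{k<n} p_k ∂^k` has order `< n` and weight `≥ -N`, where `x^j ∂^k` has weight `j - k`. -/
def IsFuchsian (n : ℕ) (N : ℤ) (R : A⸨X⸩ → A⸨X⸩) : Prop :=
  ∃ p : ℕ → A⸨X⸩, (∀ k < n, ((k - N : ℤ) : WithTop ℤ) ≤ (p k).orderTop) ∧
    ∀ f, R f = ∑ k ∈ Finset.range n, p k * lderiv^[k] f

namespace IsFuchsian

variable {n : ℕ} {N : ℤ} {R S : A⸨X⸩ → A⸨X⸩}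

theorem congr (hR : IsFuchsian n N R) (h : ∀ f, R f = S f) : IsFuchsian n N S :=
  funext h ▸ hR

theorem zero : IsFuchsian n N fun _ => (0 : A⸨X⸩) :=
  ⟨0, fun _ _ => by simp, fun _ => by simp⟩

theorem add (hR : IsFuchsian n N R) (hS : IsFuchsian n N S) :
    IsFuchsian n N fun f => R f + S f := by
  obtain ⟨p, hp, hR⟩ := hR
  obtain ⟨q, hq, hS⟩ := hS
  exact ⟨p + q, fun k hk => le_orderTop_add (hp k hk) (hq k hk),
    fun f => by simp [hR, hS, add_mul, Finset.sum_add_distrib]⟩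

theorem sub (hR : IsFuchsian n N R) (hS : IsFuchsian n N S) :
    IsFuchsian n N fun f => R f - S f := by
  obtain ⟨p, hp, hR⟩ := hR
  obtain ⟨q, hq, hS⟩ := hS
  exact ⟨p - q, fun k hk => le_orderTop_sub (hp k hk) (hq k hk),
    fun f => by simp [hR, hS, sub_mul, Finset.sum_sub_distrib]⟩

theorem mul_left {h : A⸨X⸩} {N' : ℤ} (hh : ((N - N' : ℤ) : WithTop ℤ) ≤ h.orderTop)
    (hR : IsFuchsian n N R) : IsFuchsian n N' fun f => h * R f := by
  obtain ⟨p, hp, hR⟩ := hR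
  exact ⟨fun k => h * p k, fun k hk => le_orderTop_of_le (le_orderTop_mul hh (hp k hk)) (by omega),
    fun f => by simp [hR, Finset.mul_sum, mul_assoc]⟩

theorem mono_weight (hR : IsFuchsian n N R) {N' : ℤ} (h : N ≤ N') : IsFuchsian n N' R :=
  let ⟨p, hp, hR⟩ := hR
  ⟨p, fun k hk => le_orderTop_of_le (hp k hk) (by omega), hR⟩

theorem add_monomial (hR : IsFuchsian n N R) {p : A⸨X⸩}
    (hp : ((n - N : ℤ) : WithTop ℤ) ≤ p.orderTop) :
    IsFuchsian (n + 1) N fun f => R f + p * lderiv^[n] f := by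
  obtain ⟨q, hq, hR⟩ := hR
  refine ⟨Function.update q n p, fun k hk => ?_, fun f => ?_⟩
  · rcases (Nat.lt_succ_iff.1 hk).eq_or_lt with rfl | hk
    · simpa using hp
    · simpa [Function.update_of_ne hk.ne] using hq k hk
  · dsimp only
    rw [Finset.sum_range_succ, Function.update_self, hR]
    congr 1
    exact Finset.sum_congr rfl fun k hk => by
      rw [Function.update_of_ne (Finset.mem_range.1 hk).ne]

theorem exists_eq_add_monomial (hR : IsFuchsian (n + 1) N R) :
    ∃ S p, IsFuchsian n N S ∧ ((n - N : ℤ) : WithTop ℤ) ≤ p.orderTop ∧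
      ∀ f, R f = S f + p * lderiv^[n] f := by
  obtain ⟨p, hp, hR⟩ := hR
  exact ⟨fun f => ∑ k ∈ Finset.range n, p k * lderiv^[k] f, p n,
    ⟨p, fun k hk => hp k (by omega), fun _ => rfl⟩, hp n n.lt_succ_self,
    fun f => by rw [hR, Finset.sum_range_succ]⟩

theorem lderiv_comp (hR : IsFuchsian n N R) :
    IsFuchsian (n + 1) (N + 1) fun f => lderiv (R f) := by
  obtain ⟨p, hp, hR⟩ := hR
  have hcoeff : IsFuchsian (n + 1) (N + 1)
      fun f => ∑ k ∈ Finset.range n, lderiv (p k) * lderiv^[k] f := by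
    have h : IsFuchsian n (N + 1) fun f => ∑ k ∈ Finset.range n, lderiv (p k) * lderiv^[k] f :=
      ⟨fun k => lderiv (p k),
        fun k hk => le_orderTop_of_le (le_orderTop_lderiv (hp k hk)) (by omega), fun _ => rfl⟩
    exact (h.add_monomial (p := 0) (by simp)).congr fun f => by simp
  have hshift : IsFuchsian (n + 1) (N + 1)
      fun f => ∑ k ∈ Finset.range n, p k * lderiv^[k + 1] f := by
    refine ⟨fun k => if k = 0 then 0 else p (k - 1), fun k hk => ?_, fun f => ?_⟩
    · dsimp only
      split_ifs with h
      · simp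
      · exact le_orderTop_of_le (hp (k - 1) (by omega)) (by omega)
    · simp [Finset.sum_range_succ']
  refine (hcoeff.add hshift).congr fun f => ?_
  rw [hR, lderiv_sum, ← Finset.sum_add_distrib]
  refine Finset.sum_congr rfl fun k _ => ?_
  rw [lderiv_mul, Function.iterate_succ_apply']

end IsFuchsian

theorem isFuchsian_iterate_lderiv_mul {w : A⸨X⸩} (hw : ((-1 : ℤ) : WithTop ℤ) ≤ w.orderTop)
    (k : ℕ) : IsFuchsian (k + 1) (k + 1 : ℕ) fun f => lderiv^[k] (w * f) := by
  induction k with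
  | zero => exact (IsFuchsian.zero.add_monomial (p := w) (by simpa using hw)).congr fun f => by simp
  | succ k ih =>
    exact (ih.lderiv_comp.mono_weight (by omega)).congr fun f =>
      (Function.iterate_succ_apply' lderiv k (w * f)).symm

theorem IsFuchsian.exists_eq_comp_add {w : A⸨X⸩} (hw : ((-1 : ℤ) : WithTop ℤ) ≤ w.orderTop)
    {n : ℕ} {N : ℤ} {S : A⸨X⸩ → A⸨X⸩} (hS : IsFuchsian (n + 1) N S) :
    ∃ R r, IsFuchsian n (N - 1) R ∧ ∀ f, S f = R (lderiv f + w * f) + r * f := by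
  induction n generalizing S with
  | zero =>
    obtain ⟨p, -, hS⟩ := hS
    exact ⟨fun _ => 0, p 0, IsFuchsian.zero, fun f => by simp [hS]⟩
  | succ n ih =>
    obtain ⟨S₀, p, hS₀, hp, hS⟩ := hS.exists_eq_add_monomial
    obtain ⟨R, r, hR, hT⟩ := ih (hS₀.sub ((isFuchsian_iterate_lderiv_mul hw n).mul_left hp))
    refine ⟨fun g => R g + p * lderiv^[n] g, r,
      hR.add_monomial (le_orderTop_of_le hp (by omega)), fun f => ?_⟩
    dsimp only
    rw [hS, iterate_lderiv_add, ← Function.iterate_succ_apply]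
    linear_combination hT f

theorem isFuchsian_doprMonic_sub (n : ℕ) (b : ℕ → ℤ → A) :
    IsFuchsian n n fun f => DoprMonic n b f - lderiv^[n] f := by
  refine ⟨fun k => shiftSeries (-(n - k : ℕ)) (fun l => b (n - k) (l - (n - k : ℕ))),
    fun k hk => le_orderTop_of_le (le_orderTop_shiftSeries _ _) (by omega), fun f => ?_⟩
  dsimp only
  rw [DoprMonic, add_sub_cancel_left, Finset.sum_Icc_one_eq_sum_range_sub]
  refine Finset.sum_congr rfl fun k hk => ?_
  rw [Nat.sub_sub_self (Finset.mem_range.1 hk).le]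

theorem IsFuchsian.exists_doprMonic_eq {n : ℕ} {R : A⸨X⸩ → A⸨X⸩} (hR : IsFuchsian n n R) :
    ∃ b, ∀ f, DoprMonic n b f = lderiv^[n] f + R f := by
  obtain ⟨p, hp, hR⟩ := hR
  refine ⟨fun i j => (p (n - i)).coeff j, fun f => ?_⟩
  rw [DoprMonic, hR, Finset.sum_Icc_one_eq_sum_range_sub]
  congr 1
  refine Finset.sum_congr rfl fun k hk => ?_
  have hk := Finset.mem_range.1 hk
  rw [Nat.sub_sub_self hk.le, shiftSeries_eq_of_le_orderTop
    (le_orderTop_of_le (hp k hk) (by omega)) fun l => by rw [neg_add_eq_sub]]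

theorem exists_doprMonic_eq_comp_add {w : A⸨X⸩} (hw : ((-1 : ℤ) : WithTop ℤ) ≤ w.orderTop)
    (n : ℕ) (b : ℕ → ℤ → A) :
    ∃ b' r, ∀ f, DoprMonic (n + 1) b f = DoprMonic n b' (lderiv f + w * f) + r * f := by
  obtain ⟨R, r, hR, hS⟩ := ((isFuchsian_doprMonic_sub (n + 1) b).sub
    (isFuchsian_iterate_lderiv_mul hw n)).exists_eq_comp_add hw
  obtain ⟨b', hb'⟩ := (hR.mono_weight (N' := n) (by omega)).exists_doprMonic_eq
  refine ⟨b', r, fun f => ?_⟩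
  rw [hb', iterate_lderiv_add, ← Function.iterate_succ_apply]
  linear_combination hS f

noncomputable def firstOrderCoeff (ν : ℤ) (c : A⟦X⟧) : A⸨X⸩ :=
  (c : A⸨X⸩) - ν • single (-1) 1

theorem firstOrderOp_eq_lderiv_add_mul (ν : ℤ) (c : A⟦X⟧) (g : A⸨X⸩) :
    firstOrderOp ν c g = lderiv g + firstOrderCoeff ν c * g := by
  rw [firstOrderOp, firstOrderCoeff, sub_mul, smul_mul_assoc]
  abel

theorem le_orderTop_firstOrderCoeff (ν : ℤ) (c : A⟦X⟧) :
    ((-1 : ℤ) : WithTop ℤ) ≤ (firstOrderCoeff ν c).orderTop :=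
  le_orderTop_sub ((WithTop.coe_le_coe.2 (by norm_num)).trans (zero_le_orderTop_coe c))
    (orderTop_single_le.trans (orderTop_le_orderTop_smul _ _))

theorem firstOrderOp_single_mul_coe (ν : ℤ) (c : A⟦X⟧) (m : ℤ) (U : A⟦X⟧) :
    firstOrderOp ν c (single m 1 * (U : A⸨X⸩)) =
      single (m - 1) 1 * ((((m - ν : ℤ) : A⟦X⟧) * U +
        PowerSeries.X * (d⁄dX A U + c * U) : A⟦X⟧) : A⸨X⸩) := by
  have hX : single m (1 : A) = single (m - 1) 1 * ((PowerSeries.X : A⟦X⟧) : A⸨X⸩) := by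
    rw [ofPowerSeries_X, single_mul_single, sub_add_cancel, one_mul]
  have hinv : single (-1) (1 : A) * single m 1 = single (m - 1) 1 := by
    rw [single_mul_single, one_mul, neg_add_eq_sub]
  have hder : lderiv (single m (1 : A)) = (m : A⸨X⸩) * single (m - 1) 1 := by
    rw [lderiv_single, ← map_intCast (C : A →+* A⸨X⸩), C_apply, single_mul_single, zero_add,
      mul_one, zsmul_one]
  rw [firstOrderOp, lderiv_mul, hder, lderiv_coe, ← mul_assoc (single (-1) 1), hinv, hX]
  simp only [map_add, map_mul, map_intCast]
  push_cast
  ring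

theorem exists_firstOrderOp_shiftSeries (ν : ℤ) (c : A⟦X⟧) (m : ℤ) (a : ℕ → A) :
    ∃ a' : ℕ → A, firstOrderOp ν c (shiftSeries m a) = shiftSeries (m - 1) a' ∧
      a' 0 = ((m - ν : ℤ) : A) * a 0 := by
  refine ⟨fun l => PowerSeries.coeff l (((m - ν : ℤ) : A⟦X⟧) * PowerSeries.mk a +
    PowerSeries.X * (d⁄dX A (PowerSeries.mk a) + c * PowerSeries.mk a)), ?_, by simp⟩
  rw [shiftSeries, shiftSeries, firstOrderOp_single_mul_coe]
  congr 2
  ext l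
  rw [PowerSeries.coeff_mk]

theorem exists_firstOrderOp_shiftSeries_eq_zero (m : ℤ) {a : ℕ → A} (ha : IsUnit (a 0)) :
    ∃ c : A⟦X⟧, firstOrderOp m c (shiftSeries m a) = 0 := by
  have hU : IsUnit (PowerSeries.mk a) := PowerSeries.isUnit_iff_constantCoeff.2 ha
  refine ⟨-d⁄dX A (PowerSeries.mk a) * ↑hU.unit⁻¹, ?_⟩
  rw [shiftSeries, firstOrderOp_single_mul_coe, sub_self, Int.cast_zero, zero_mul, zero_add,
    neg_mul, neg_mul, mul_assoc, hU.val_inv_mul, mul_one, add_neg_cancel, mul_zero, map_zero,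
    mul_zero]

theorem doprMonic_zero (n : ℕ) (b : ℕ → ℤ → A) : DoprMonic n b 0 = 0 := by
  simp [DoprMonic, iterate_lderiv_zero]

theorem List.foldr_comp_concat {α : Type*} (l : List (α → α)) (g : α → α) (x : α) :
    (l.concat g).foldr (· ∘ ·) id x = l.foldr (· ∘ ·) id (g x) := by
  induction l with
  | nil => rfl
  | cons h l ih => simp only [List.concat_cons, List.foldr_cons, Function.comp_apply, ih]

theorem exists_factorization_of_solutions (n : ℕ) (b : ℕ → ℤ → A) (m : Fin n → ℤ)
    (hm : Pairwise fun i j => IsUnit ((m i - m j : ℤ) : A))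
    (a : Fin n → ℕ → A) (ha : ∀ i, IsUnit (a i 0))
    (hsol : ∀ i, DoprMonic n b (shiftSeries (m i) (a i)) = 0) :
    ∃ c : Fin n → A⟦X⟧, ∀ f, DoprMonic n b f =
      (List.ofFn fun i : Fin n => firstOrderOp (m i.rev - n + (i + 1)) (c i)).foldr (· ∘ ·) id
        f := by
  induction n generalizing b with
  | zero => exact ⟨Fin.elim0, fun f => by simp [DoprMonic]⟩
  | succ n ih =>
    obtain ⟨c₀, hc₀⟩ := exists_firstOrderOp_shiftSeries_eq_zero (m 0) (ha 0)
    obtain ⟨b', r, hD⟩ := exists_doprMonic_eq_comp_add (le_orderTop_firstOrderCoeff (m 0) c₀) n b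
    simp only [← firstOrderOp_eq_lderiv_add_mul] at hD
    have hr : r = 0 := by
      have h := hsol 0
      rw [hD, hc₀, doprMonic_zero, zero_add] at h
      exact (isUnit_shiftSeries (m 0) (ha 0)).mul_left_eq_zero.1 h
    simp only [hr, zero_mul, add_zero] at hD
    choose a' hL ha' using fun i : Fin n =>
      exists_firstOrderOp_shiftSeries (m 0) c₀ (m i.succ) (a i.succ)
    have hm' : Pairwise fun i j : Fin n => IsUnit ((m i.succ - 1 - (m j.succ - 1) : ℤ) : A) :=
      fun i j hij => by simpa [sub_sub_sub_cancel_right] using hm (Fin.succ_injective _ |>.ne hij)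
    have hunit' : ∀ i, IsUnit (a' i 0) := fun i => by
      rw [ha' i]
      exact (hm (Fin.succ_ne_zero i)).mul (ha i.succ)
    have hsol' : ∀ i, DoprMonic n b' (shiftSeries (m i.succ - 1) (a' i)) = 0 := fun i => by
      rw [← hL i, ← hD]
      exact hsol i.succ
    obtain ⟨c', hc'⟩ := ih b' (fun i => m i.succ - 1) hm' a' hunit' hsol'
    refine ⟨Fin.snoc c' c₀, fun f => ?_⟩
    rw [hD, hc', List.ofFn_succ', List.foldr_comp_concat]
    simp [Fin.snoc_castSucc, Fin.rev_castSucc, sub_sub, add_comm]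

end

/-- If the monic operator `D` of order `n` annihilates Laurent series
`f_i = x^{m_i} + a_1^{(i)} x^{m_i+1} + ⋯` for `i = 1, …, n` with `m_1 < ⋯ < m_n`, then with
`ν_i = m_{n+1−i} − n + i` there exist power series `c_1, …, c_n ∈ A[[x]]` such that
`D = D_1 D_2 ⋯ D_n` where `D_i g = g′ − ν_i x^{−1} g + c_i g`. -/
theorem factorization_into_first_order (A : Type*) [CommRing A] [Algebra ℂ A]
    (n : ℕ) (b : ℕ → ℤ → A) (m : Fin n → ℤ) (hm : StrictMono m)
    (a : Fin n → ℕ → A) (ha : ∀ i, a i 0 = 1)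
    (hsol : ∀ i, DoprMonic n b (shiftSeries (m i) (a i)) = 0) :
    ∃ c : Fin n → PowerSeries A, ∀ f : LaurentSeries A,
      DoprMonic n b f =
        ((List.ofFn fun i : Fin n =>
            firstOrderOp (m ⟨n - 1 - (i : ℕ), by have := i.isLt; omega⟩
              - (n : ℤ) + ((i : ℕ) + 1 : ℤ)) (c i)).foldr (· ∘ ·) id) f := by
  have hunit : Pairwise fun i j => IsUnit ((m i - m j : ℤ) : A) := fun i j hij => by
    have h : ((m i - m j : ℤ) : ℂ) ≠ 0 := by exact_mod_cast sub_ne_zero.2 (hm.injective.ne hij)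
    simpa using (isUnit_iff_ne_zero.2 h).map (algebraMap ℂ A)
  have hrev : ∀ i : Fin n, i.rev = ⟨n - 1 - i, by omega⟩ := fun i => Fin.ext (by simp; omega)
  simpa only [hrev] using
    exists_factorization_of_solutions n b m hunit a (fun i => (ha i).symm ▸ isUnit_one) hsol
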